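/- For Huber's loss ζ with parameter κ > 0 and φ(t) = ζ'(t)/t = min(1, κ/t), the surrogate function p(t; c) = ζ(c) − (1/2)c ζ'(c) + (1/2)φ(c)t² satisfies p(t; c) ≥ ζ(t) for all t ≥ 0 and every c > 0. -/
import Mathlib


theorem huber_surrogate_majorizes (κ : ℝ) (hκ : 0 < κ) (ζ : ℝ → ℝ)
    (h1 : ∀ t, 0 ≤ t → t ≤ κ → ζ t = t ^ 2 / 2)
    (h2 : ∀ t, κ ≤ t → ζ t = κ * t - κ ^ 2 / 2) :
    ∀ t, 0 ≤ t → ∀ c, 0 < c →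
      ζ t ≤ ζ c - (1 / 2) * c * min c κ + (1 / 2) * min 1 (κ / c) * t ^ 2 := by
  intro t ht c hc
  rcases le_total c κ with hcκ | hκc
  · rw [min_eq_left hcκ, min_eq_left (by rw [le_div_iff₀ hc]; linarith),
      h1 c hc.le hcκ]
    rcases le_total t κ with htκ | hκt
    · rw [h1 t ht htκ]; nlinarith
    · rw [h2 t hκt]; nlinarith [sq_nonneg (t - κ)]
  · rw [min_eq_right hκc, min_eq_right (by rw [div_le_one hc]; linarith),
      h2 c hκc]
    have hqc : κ / c * c = κ := div_mul_cancel₀ κ (ne_of_gt hc)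
    have hqt : κ / c * c * t ^ 2 = κ * t ^ 2 := by rw [hqc]
    rcases le_total t κ with htκ | hκt
    · rw [h1 t ht htκ]
      nlinarith [mul_nonneg (sub_nonneg.2 hκc) (sub_nonneg.2 (by nlinarith : t ^ 2 ≤ κ * c)), hc, hqt]
    · rw [h2 t hκt]
      nlinarith [mul_nonneg hκ.le (sq_nonneg (c - t)), hc, hqt]
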